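/- For n ≥ 3, the single-dipped domain with respect to the ordering o1, ..., on satisfies the top-two condition. -/

import Mathlib

def top {α : Type*} (P : α → α → Prop) (O' : Set α) (a : α) : Prop :=
  a ∈ O' ∧ ∀ c ∈ O', c ≠ a → P a c

def topTwo {α : Type*} (D : Set (α → α → Prop)) : Prop :=
  ∀ O' : Set α, O'.Nonempty → ∀ a b : α, a ∈ O' → b ∈ O' → a ≠ b →
    (∃ P ∈ D, top P O' a) → (∃ P ∈ D, top P O' b) →
      ∃ P0 ∈ D, top P0 O' a ∧ top P0 (O' \ {a}) b

def bottom {α : Type*} (P : α → α → Prop) (O' : Set α) (d : α) : Prop :=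
  d ∈ O' ∧ ∀ c ∈ O', c ≠ d → P c d

/-- Single-dipped w.r.t. the ordering o1 → ... → on (objects are `Fin n`, o_k = k-1):
if d is the least-preferred object, the preference decreases up to d and increases after d. -/
def singleDipped {n : ℕ} (P : Fin n → Fin n → Prop) : Prop :=
  IsStrictTotalOrder (Fin n) P ∧
    ∀ d : Fin n, bottom P Set.univ d →
      ∀ k : ℕ, ∀ hk : k + 1 < n,
        (k + 1 ≤ (d : ℕ) → P ⟨k, by omega⟩ ⟨k + 1, hk⟩) ∧
        ((d : ℕ) ≤ k → P ⟨k + 1, hk⟩ ⟨k, by omega⟩)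

/-- The single-dipped domain. -/
def SDDomain (n : ℕ) : Set (Fin n → Fin n → Prop) := {P | singleDipped P}

/-!
Below its dip a single-dipped preference falls and above it rises, so the best object of any
menu is the menu's least or greatest element; two distinct attainable tops `a`, `b` of `O'` are
therefore its two extremes. Ranking objects by their distance from a point just past the midpoint
of `a` and `b`, on the side of `b`, is single-dipped and puts `a` first and `b` second on `O'`.
-/

open Set

theorem exists_bottom_univ {α : Type*} [Finite α] [Nonempty α] (P : α → α → Prop)
    [IsStrictTotalOrder α P] : ∃ d, bottom P univ d := by
  obtain ⟨d, -, hd⟩ :=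
    (Finite.wellFounded_of_trans_of_irrefl (Function.swap P)).has_min univ univ_nonempty
  exact ⟨d, mem_univ d, fun c _ hcd =>
    by_contra fun hcd' => hcd (Std.Trichotomous.trichotomous c d hcd' (hd c trivial))⟩

namespace singleDipped

variable {n : ℕ} {P : Fin n → Fin n → Prop} {d : Fin n}

theorem rel_of_lt_of_le_bottom (hP : singleDipped P) (hd : bottom P univ d) {i j : Fin n}
    (hij : i < j) (hjd : j ≤ d) : P i j := by
  have := hP.1
  obtain ⟨i, hi⟩ := i
  obtain ⟨j, hj⟩ := j
  rw [Fin.mk_lt_mk] at hij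
  rw [Fin.mk_le_mk] at hjd
  induction j, hij using Nat.le_induction with
  | base => exact (hP.2 d hd i hj).1 hjd
  | succ j hij ih =>
    exact _root_.trans (ih (by omega) (by omega)) ((hP.2 d hd j hj).1 hjd)

theorem rel_of_bottom_le_of_lt (hP : singleDipped P) (hd : bottom P univ d) {i j : Fin n}
    (hdi : d ≤ i) (hij : i < j) : P j i := by
  have := hP.1
  obtain ⟨i, hi⟩ := i
  obtain ⟨j, hj⟩ := j
  rw [Fin.mk_lt_mk] at hij
  rw [Fin.mk_le_mk] at hdi
  induction j, hij using Nat.le_induction with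
  | base => exact (hP.2 d hd i hj).2 hdi
  | succ j hij ih =>
    exact _root_.trans ((hP.2 d hd j hj).2 (by omega)) (ih (by omega))

theorem isLeast_or_isGreatest_of_top (hP : singleDipped P) {O' : Set (Fin n)} {a : Fin n}
    (ha : top P O' a) : IsLeast O' a ∨ IsGreatest O' a := by
  have := hP.1
  have : Nonempty (Fin n) := ⟨a⟩
  obtain ⟨d, hd⟩ := exists_bottom_univ P
  by_contra h
  simp only [IsLeast, IsGreatest, ha.1, true_and, not_or, mem_lowerBounds, mem_upperBounds,
    not_forall, not_le] at h
  obtain ⟨⟨c, hc, hca⟩, ⟨e, he, hae⟩⟩ := h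
  rcases le_total a d with had | hda
  · exact irrefl a (_root_.trans (ha.2 c hc hca.ne) (hP.rel_of_lt_of_le_bottom hd hca had))
  · exact irrefl a (_root_.trans (ha.2 e he hae.ne') (hP.rel_of_bottom_le_of_lt hd hda hae))

end singleDipped

/-- Ranking by distance from the point `s / 4`, farther being better; for odd `s` there are
no ties. -/
def distPref (n : ℕ) (s : ℤ) (x y : Fin n) : Prop :=
  |4 * (y : ℤ) - s| < |4 * (x : ℤ) - s|

theorem distPref_mem_SDDomain {n : ℕ} {s : ℤ} (hs : Odd s) : distPref n s ∈ SDDomain n := by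
  obtain ⟨t, rfl⟩ := hs
  refine ⟨{ trichotomous := ?_, irrefl := fun x => lt_irrefl _, trans := ?_ }, ?_⟩
  · intro x y hxy hyx
    simp only [distPref, abs_eq_max_neg] at hxy hyx
    omega
  · exact fun x y z hxy hyz => hyz.trans hxy
  · intro d hd k hk
    have hk_d := hd.2 ⟨k, by omega⟩ trivial
    have hk1_d := hd.2 ⟨k + 1, hk⟩ trivial
    simp only [distPref, ne_eq, Fin.ext_iff, abs_eq_max_neg] at hk_d hk1_d ⊢
    omega

theorem exists_mem_SDDomain_top_and_top_diff {n : ℕ} {O' : Set (Fin n)} {a b : Fin n}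
    (hab : a ≠ b) (haO : a ∈ O') (hbO : b ∈ O') (hO' : O' ⊆ uIcc a b) :
    ∃ P0 ∈ SDDomain n, top P0 O' a ∧ top P0 (O' \ {a}) b := by
  -- centre just past the midpoint of `a` and `b`, on the side of `b`
  refine ⟨distPref n (2 * (a + b) + if a < b then 1 else -1), distPref_mem_SDDomain ?_,
    ⟨haO, fun c hc hca => ?_⟩, ⟨⟨hbO, hab.symm⟩, fun c hc hcb => ?_⟩⟩
  · split_ifs
    exacts [⟨a + b, by ring⟩, ⟨a + b - 1, by ring⟩]
  · have := mem_uIcc.1 (hO' hc)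
    simp only [distPref, abs_eq_max_neg]
    split_ifs <;> omega
  · have := mem_uIcc.1 (hO' hc.1)
    have hca : c ≠ a := hc.2
    simp only [distPref, abs_eq_max_neg]
    split_ifs <;> omega

theorem stmt7_general {n : ℕ} : topTwo (SDDomain n) := by
  rintro O' - a b haO hbO hab ⟨Pa, hPa, ha⟩ ⟨Pb, hPb, hb⟩
  refine exists_mem_SDDomain_top_and_top_diff hab haO hbO fun c hc => mem_uIcc.2 ?_
  rcases hPa.isLeast_or_isGreatest_of_top ha with ha | ha <;>
    rcases hPb.isLeast_or_isGreatest_of_top hb with hb | hb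
  · exact absurd (ha.unique hb) hab
  · exact Or.inl ⟨ha.2 hc, hb.2 hc⟩
  · exact Or.inr ⟨hb.2 hc, ha.2 hc⟩
  · exact absurd (ha.unique hb) hab

theorem stmt7 {n : ℕ} (hn : 3 ≤ n) : topTwo (SDDomain n) :=
  stmt7_general
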